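/- arXiv:1504.00173 — 2 statements merged into one kernel-verified Lean document; each statement's English description precedes it below -/
import Mathlib

section
/- Every residually finite group is weakly residually finite: for every Cayley graph G of a residually finite group (with respect to a finite generating set) and every natural number r, there exists a finite graph H such that every ball of radius r in H is isomorphic to the ball of radius r in G. -/
open SimpleGraph

/-- The Cayley graph of a group `Γ` with respect to a generating set `S`. -/
def cayley {Γ : Type*} [Group Γ] (S : Set Γ) : SimpleGraph Γ where
  Adj g h := g ≠ h ∧ (g⁻¹ * h ∈ S ∨ h⁻¹ * g ∈ S)
  symm := ⟨fun g h ⟨hne, hs⟩ => ⟨hne.symm, hs.symm⟩⟩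
  loopless := ⟨fun g ⟨hne, _⟩ => hne rfl⟩

/-!
Residual finiteness gives a finite quotient `Γ ⧸ N` in which the (finite) ball of radius `2r + 1`
of the word metric injects. Take `H` to be the Cayley graph of `Γ ⧸ N` with respect to the image
of `S`. Cayley graphs are vertex transitive, so it suffices to compare the balls around `1`, and
the quotient map identifies them: two points of the `r`-ball differ by a word of length `≤ 2r`,
so whether their images are adjacent, i.e. differ by an image of a generator, is already decided
in `Γ`.
-/

open scoped Pointwise

theorem Group.exists_normal_finiteIndex_injOn_mk {G : Type*} [Group G]
    [Group.ResiduallyFinite G] {F : Set G} (hF : F.Finite) :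
    ∃ N : Subgroup G, N.Normal ∧ N.FiniteIndex ∧
      Set.InjOn (QuotientGroup.mk : G → G ⧸ N) F := by
  have := hF.to_subtype
  choose H hH using fun p : {p : F × F // (p.1 : G) ≠ p.2} =>
    exists_finiteIndexNormalSubgroup_of_residuallyFinite (p.1.1 : G) p.1.2 p.2
  refine ⟨⨅ p, (H p).toSubgroup, Subgroup.normal_iInf_normal fun _ => inferInstance,
    Subgroup.finiteIndex_iInf fun _ => inferInstance, fun a ha b hb hab => ?_⟩
  by_contra hne
  apply hH ⟨(⟨a, ha⟩, ⟨b, hb⟩), hne⟩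
  rw [QuotientGroup.eq] at hab ⊢
  exact Subgroup.mem_iInf.1 hab _

lemma Set.Finite.pow {M : Type*} [Monoid M] {s : Set M} (hs : s.Finite) :
    ∀ n : ℕ, (s ^ n).Finite
  | 0 => by simp
  | n + 1 => by rw [pow_succ]; exact (hs.pow n).mul hs

section WordBall

variable {Γ Q : Type*} [Group Γ] [Group Q] {S : Set Γ} {a b : Γ} {m n r : ℕ}

variable (S) in
def wordBall (n : ℕ) : Set Γ := insert 1 (S ∪ S⁻¹) ^ n

lemma wordBall_mono : Monotone (wordBall S) :=
  Set.pow_right_monotone (Set.mem_insert 1 _)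

lemma wordBall_add : wordBall S (m + n) = wordBall S m * wordBall S n :=
  pow_add _ m n

lemma inv_wordBall : (wordBall S n)⁻¹ = wordBall S n := by
  rw [wordBall, ← inv_pow, Set.inv_insert, inv_one, Set.union_inv, inv_inv, Set.union_comm]

lemma inv_mul_mem_wordBall (ha : a ∈ wordBall S m) (hb : b ∈ wordBall S n) :
    a⁻¹ * b ∈ wordBall S (m + n) :=
  wordBall_add (S := S) ▸ Set.mul_mem_mul (inv_wordBall (S := S) ▸ Set.inv_mem_inv.2 ha) hb

lemma subset_wordBall (hn : n ≠ 0) : S ⊆ wordBall S n :=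
  (Set.subset_union_left.trans (Set.subset_insert _ _)).trans
    (Set.subset_pow (Set.mem_insert 1 _) hn)

lemma Set.Finite.wordBall (hS : S.Finite) (n : ℕ) : (wordBall S n).Finite :=
  ((hS.union hS.inv).insert 1).pow n

lemma image_wordBall (φ : Γ →* Q) (S : Set Γ) (n : ℕ) :
    φ '' wordBall S n = wordBall (φ '' S) n := by
  rw [wordBall, wordBall, Set.image_pow, Set.image_insert_eq, Set.image_union, Set.image_inv,
    map_one]

lemma exists_mem_wordBall (hgen : Subgroup.closure S = ⊤) (g : Γ) :
    ∃ n, g ∈ wordBall S n := by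
  induction hgen ▸ Subgroup.mem_top g using Subgroup.closure_induction with
  | mem x hx => exact ⟨1, subset_wordBall one_ne_zero hx⟩
  | one => exact ⟨0, Set.mem_one.2 rfl⟩
  | mul x y _ _ hx hy =>
    obtain ⟨m, hm⟩ := hx
    obtain ⟨n, hn⟩ := hy
    exact ⟨m + n, wordBall_add (S := S) ▸ Set.mul_mem_mul hm hn⟩
  | inv x _ hx =>
    obtain ⟨n, hn⟩ := hx
    exact ⟨n, inv_wordBall (S := S) ▸ Set.inv_mem_inv.2 hn⟩

end WordBall

section CayleyGraph

variable {Γ Q : Type*} [Group Γ] [Group Q] {S : Set Γ} {a b : Γ} {n r : ℕ}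

lemma cayley_eq_mulCayley (S : Set Γ) : cayley S = mulCayley S := by
  ext g h
  rw [mulCayley_adj]
  rfl

variable (S) in
def cayleyMulLeft (a : Γ) : cayley S ≃g cayley S where
  toEquiv := Equiv.mulLeft a
  map_rel_iff' := by
    rw [cayley_eq_mulCayley]
    exact mulCayley_adj_mul_iff_right

lemma eq_or_cayley_adj_iff : a = b ∨ (cayley S).Adj a b ↔ a⁻¹ * b ∈ wordBall S 1 := by
  rw [wordBall, pow_one, Set.mem_insert_iff, Set.mem_union, Set.mem_inv, mul_inv_rev, inv_inv,
    inv_mul_eq_one]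
  by_cases hab : a = b <;> simp [cayley, hab]

lemma inv_mul_mem_wordBall_of_walk (p : (cayley S).Walk a b) :
    a⁻¹ * b ∈ wordBall S p.length := by
  induction p with
  | nil => simp [wordBall]
  | @cons a c b hac p ih =>
    rw [Walk.length_cons, add_comm, wordBall_add]
    simpa [mul_assoc] using Set.mul_mem_mul (eq_or_cayley_adj_iff.1 (.inr hac)) ih

lemma exists_walk_of_inv_mul_mem_wordBall (h : a⁻¹ * b ∈ wordBall S n) :
    ∃ p : (cayley S).Walk a b, p.length ≤ n := by
  induction n generalizing a with
  | zero =>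
    obtain rfl : a = b := inv_mul_eq_one.1 (Set.mem_one.1 h)
    exact ⟨.nil, le_rfl⟩
  | succ n ih =>
    rw [add_comm, wordBall_add] at h
    obtain ⟨u, hu, v, hv, huv⟩ := h
    obtain ⟨p, hp⟩ :=
      ih (a := a * u) (by rwa [mul_inv_rev, mul_assoc, ← huv, inv_mul_cancel_left])
    rcases (eq_or_cayley_adj_iff (b := a * u)).2 (by rwa [inv_mul_cancel_left]) with hau | hau
    · exact ⟨p.copy hau.symm rfl, by rw [Walk.length_copy]; omega⟩
    · exact ⟨.cons hau p, by rw [Walk.length_cons]; omega⟩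

lemma exists_walk_length_le_iff :
    (∃ p : (cayley S).Walk a b, p.length ≤ n) ↔ a⁻¹ * b ∈ wordBall S n :=
  ⟨fun ⟨p, hp⟩ => wordBall_mono hp (inv_mul_mem_wordBall_of_walk p),
    exists_walk_of_inv_mul_mem_wordBall⟩

lemma cayley_connected (hgen : Subgroup.closure S = ⊤) : (cayley S).Connected where
  preconnected a b :=
    have ⟨_, h⟩ := exists_mem_wordBall hgen (a⁻¹ * b)
    have ⟨p, _⟩ := exists_walk_of_inv_mul_mem_wordBall h
    p.reachable

lemma cayley_dist_le_iff (hgen : Subgroup.closure S = ⊤) :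
    (cayley S).dist a b ≤ n ↔ a⁻¹ * b ∈ wordBall S n := by
  rw [← exists_walk_length_le_iff]
  constructor
  · obtain ⟨p, hp⟩ := (cayley_connected hgen).exists_walk_length_eq_dist a b
    exact fun h => ⟨p, hp ▸ h⟩
  · exact fun ⟨p, hp⟩ => (dist_le p).trans hp

lemma bijOn_ball_wordBall (hgen : Subgroup.closure S = ⊤) (a : Γ) (r : ℕ) :
    Set.BijOn (a⁻¹ * ·) {u | (cayley S).dist a u ≤ r} (wordBall S r) := by
  simp_rw [cayley_dist_le_iff hgen]
  exact (Group.mulLeft_bijective a⁻¹).bijOn_preimage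

def cayleyInduceBallIso (hgen : Subgroup.closure S = ⊤) (a : Γ) (r : ℕ) :
    (cayley S).induce {u | (cayley S).dist a u ≤ r} ≃g (cayley S).induce (wordBall S r) :=
  (cayleyMulLeft S a⁻¹).induce (bijOn_ball_wordBall hgen a r)

variable {φ : Γ →* Q}

lemma map_mem_image_iff_of_injOn (hφ : Set.InjOn φ (wordBall S (2 * r + 1))) {g : Γ}
    (hg : g ∈ wordBall S (2 * r)) : φ g ∈ φ '' S ↔ g ∈ S :=
  hφ.mem_image_iff (subset_wordBall (by omega)) (wordBall_mono (by omega) hg)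

lemma cayley_adj_map_iff (hφ : Set.InjOn φ (wordBall S (2 * r + 1))) (ha : a ∈ wordBall S r)
    (hb : b ∈ wordBall S r) :
    (cayley (φ '' S)).Adj (φ a) (φ b) ↔ (cayley S).Adj a b := by
  have hab : a⁻¹ * b ∈ wordBall S (2 * r) := two_mul r ▸ inv_mul_mem_wordBall ha hb
  have hba : b⁻¹ * a ∈ wordBall S (2 * r) := two_mul r ▸ inv_mul_mem_wordBall hb ha
  simp only [cayley, ← map_inv, ← map_mul, map_mem_image_iff_of_injOn hφ hab,
    map_mem_image_iff_of_injOn hφ hba,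
    hφ.ne_iff (wordBall_mono (by omega) ha) (wordBall_mono (by omega) hb)]

lemma bijOn_wordBall (hφ : Set.InjOn φ (wordBall S (2 * r + 1))) :
    Set.BijOn φ (wordBall S r) (wordBall (φ '' S) r) :=
  image_wordBall φ S r ▸ (hφ.mono (wordBall_mono (by omega))).bijOn_image

noncomputable def cayleyInduceWordBallIso (hφ : Set.InjOn φ (wordBall S (2 * r + 1))) :
    (cayley S).induce (wordBall S r) ≃g (cayley (φ '' S)).induce (wordBall (φ '' S) r) where
  toEquiv := (bijOn_wordBall hφ).equiv φ
  map_rel_iff' {a b} := cayley_adj_map_iff hφ a.2 b.2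

end CayleyGraph

/-- Every residually finite group is weakly residually finite: for every Cayley graph `G`
of a residually finite group with respect to a finite generating set `S`, and every `r`,
there is a finite graph `H` all of whose balls of radius `r` are isomorphic to the ball of
radius `r` (around the identity) in `G`. -/
theorem residually_finite_implies_weakly_residually_finite
    {Γ : Type} [Group Γ] (S : Finset Γ)
    (hgen : Subgroup.closure (S : Set Γ) = ⊤)
    (hrf : ∀ g : Γ, g ≠ 1 → ∃ (Q : Type) (_ : Group Q) (_ : Finite Q) (f : Γ →* Q), f g ≠ 1)
    (r : ℕ) :
    ∃ (W : Type) (_ : Fintype W) (H : SimpleGraph W), Nonempty W ∧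
      ∀ x : W, Nonempty ((H.induce {u | H.dist x u ≤ r}) ≃g
        ((cayley (S : Set Γ)).induce {u | (cayley (S : Set Γ)).dist 1 u ≤ r})) := by
  have := Group.residuallyFinite_of_forall_exists_finite_monoidHom hrf
  obtain ⟨N, _, _, hφ⟩ :=
    Group.exists_normal_finiteIndex_injOn_mk (S.finite_toSet.wordBall (2 * r + 1))
  let φ := QuotientGroup.mk' N
  have hgenφ : Subgroup.closure (φ '' S) = ⊤ := by
    rw [← MonoidHom.map_closure, hgen,
      Subgroup.map_top_of_surjective φ (QuotientGroup.mk'_surjective N)]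
  refine ⟨Γ ⧸ N, Fintype.ofFinite _, cayley (φ '' S), ⟨1⟩, fun x => ⟨?_⟩⟩
  exact (cayleyInduceBallIso hgenφ x r).trans <|
    (cayleyInduceWordBallIso (φ := φ) hφ).symm.trans (cayleyInduceBallIso hgen 1 r).symm
end

section
/- Let G be a connected, locally finite, vertex-transitive graph with exactly one end, and let d be the common degree of its vertices. Then the vertex connectivity of G is at least 3(d+1)/4. -/
/-!
Let `κ` be the least size of a separating set; call a nonempty finite vertex set a fragment when its
boundary has `κ` vertices, and an atom when it is a fragment of least size `μ`. In an infinite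
graph every nonempty finite set has at least `κ` boundary vertices, so submodularity of the
boundary size shows that atoms which meet coincide and that an atom meeting the boundary of a
fragment lies inside that boundary. By transitivity every vertex lies in an atom, so the boundary
of an atom is a disjoint union of atoms and `μ ∣ κ`, while an atom and its boundary contain the
closed neighbourhood of each of its vertices, so `d + 1 ≤ μ + κ`.

It remains to exclude `κ = μ` and `κ = 2μ`, where the boundary of an atom consists of one or two
atoms. For `κ = μ` two atoms are each other's boundary. For `κ = 2μ`, deleting one atom `A` (fewer
than `κ` vertices) leaves the graph connected, so the non-backtracking walk through atoms that
starts at `A` and one atom of its boundary reaches the other one and hence returns to `A`. Either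
way some finite set of atoms has no edge leaving it, which is impossible in an infinite connected
graph. So `κ ≥ 3μ` and `3(d + 1) ≤ 3(μ + κ) ≤ 4κ`. One-endedness makes the graph infinite and gives
a minimum separator a finite component, which is a fragment.
-/

open SimpleGraph

/-- A locally finite graph has exactly one end if for every finite vertex set `K` there is
exactly one infinite component of the complement of `K`. -/
def OneEnded {V : Type*} (G : SimpleGraph V) : Prop :=
  ∀ K : Finset V, ∃! C : G.ComponentCompl (K : Set V), C.supp.Infinite

open Finset

theorem Finset.dvd_card_of_forall_exists_subset {α : Type*} [DecidableEq α] {T : Finset α}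
    {n : ℕ} (p : Finset α → Prop) (hcard : ∀ B, p B → #B = n)
    (hdisj : ∀ B B', p B → p B' → ∀ v ∈ B, v ∈ B' → B = B')
    (hcov : ∀ v ∈ T, ∃ B, p B ∧ v ∈ B ∧ B ⊆ T) : n ∣ #T := by
  choose! f hfp hvf hfT using hcov
  have hT : T = (T.image f).biUnion id := by
    ext v
    simp only [mem_biUnion, mem_image, id, exists_exists_and_eq_and]
    exact ⟨fun hv => ⟨v, hv, hvf v hv⟩, fun ⟨w, hw, hv⟩ => hfT w hw hv⟩
  have hpair : (T.image f : Set (Finset α)).PairwiseDisjoint id := by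
    rintro _ hB _ hB' hne
    simp only [coe_image, Set.mem_image, mem_coe] at hB hB'
    obtain ⟨w, hw, rfl⟩ := hB
    obtain ⟨w', hw', rfl⟩ := hB'
    exact disjoint_left.2 fun v hv hv' => hne (hdisj _ _ (hfp w hw) (hfp w' hw') v hv hv')
  rw [hT, card_biUnion hpair, sum_congr rfl (g := fun _ => n), sum_const, smul_eq_mul]
  · exact dvd_mul_left _ _
  · simp only [mem_image, id]
    rintro _ ⟨w, hw, rfl⟩
    exact hcard _ (hfp w hw)

namespace SimpleGraph

theorem exists_forall_adj_of_not_injective {α : Type*} (H : SimpleGraph α)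
    {L : ℕ → α} (hadj : ∀ n, H.Adj (L n) (L (n + 1))) (hback : ∀ n, L n ≠ L (n + 2))
    (hnbr : ∀ n y, H.Adj (L (n + 1)) y → y = L n ∨ y = L (n + 2))
    (hL : ¬ Function.Injective L) :
    ∃ m, ∀ i ≤ m, ∀ y, H.Adj (L i) y → ∃ j ≤ m, L j = y := by
  classical
  have hrep : ∃ k, ∃ j < k, L j = L k := by
    simp only [Function.Injective, not_forall] at hL
    obtain ⟨a, b, hab, hne⟩ := hL
    rcases lt_or_gt_of_ne hne with h | h
    exacts [⟨b, a, h, hab⟩, ⟨a, b, h, hab.symm⟩]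
  obtain ⟨j, hjk, hj⟩ := Nat.find_spec hrep
  have hmin : ∀ i i', i < i' → i' < Nat.find hrep → L i ≠ L i' :=
    fun i i' hi hi' heq => Nat.find_min hrep hi' ⟨i, hi, heq⟩
  obtain ⟨m, hm⟩ : ∃ m, Nat.find hrep = m + 1 := Nat.exists_eq_succ_of_ne_zero (by omega)
  rw [hm] at hjk hj hmin
  -- the first repetition is a return to the start
  obtain rfl : j = 0 := by
    rcases (show j = m ∨ j + 1 = m ∨ j + 2 ≤ m by omega) with rfl | rfl | hjm
    · exact absurd hj (hadj j).ne
    · exact absurd hj (hback j)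
    obtain _ | j := j
    · rfl
    rcases hnbr j _ (hj ▸ (hadj m).symm) with h | h
    · exact absurd h.symm (hmin j m (by omega) (by omega))
    · exact absurd h.symm (hmin (j + 2) m (by omega) (by omega))
  have hm2 : 2 ≤ m := by
    rcases (show m = 0 ∨ m = 1 ∨ 2 ≤ m by omega) with rfl | rfl | h
    · exact absurd hj (hadj 0).ne
    · exact absurd hj (hback 0)
    · exact h
  have hm1 : L (m + 2) = L 1 := by
    rcases hnbr m (L 1) (hj ▸ hadj 0) with h | h
    · exact absurd h (hmin 1 m (by omega) (by omega))
    · exact h.symm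
  refine ⟨m, fun i hi y hy => ?_⟩
  obtain _ | i := i
  · rcases hnbr m y (hj ▸ hy) with rfl | rfl
    exacts [⟨m, le_rfl, rfl⟩, ⟨1, by omega, hm1.symm⟩]
  · rcases hnbr i y hy with rfl | rfl
    · exact ⟨i, by omega, rfl⟩
    · rcases (show i + 2 ≤ m ∨ i + 1 = m by omega) with h | rfl
      · exact ⟨i + 2, h, rfl⟩
      · exact ⟨0, by omega, hj⟩

variable {V : Type*} {G : SimpleGraph V}

theorem exists_adj_of_preconnected_induce_compl {W P : Set V}
    (hW : (G.induce Wᶜ).Preconnected) {x y : V} (hx : x ∈ P) (hxW : x ∉ W) (hy : y ∉ P)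
    (hyW : y ∉ W) : ∃ p ∈ P, ∃ q ∉ P, q ∉ W ∧ G.Adj p q := by
  obtain ⟨w⟩ := hW ⟨x, hxW⟩ ⟨y, hyW⟩
  obtain ⟨d, -, hd₁, hd₂⟩ := w.exists_boundary_dart {z | (z : V) ∈ P} hx hy
  exact ⟨_, hd₁, _, hd₂, d.snd.2, d.adj⟩

theorem Connected.exists_adj_of_mem_of_not_mem (hG : G.Connected) {P : Set V} {x y : V}
    (hx : x ∈ P) (hy : y ∉ P) : ∃ p ∈ P, ∃ q ∉ P, G.Adj p q := by
  obtain ⟨w⟩ := hG.preconnected x y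
  obtain ⟨d, -, hd₁, hd₂⟩ := w.exists_boundary_dart P hx hy
  exact ⟨_, hd₁, _, hd₂, d.adj⟩

variable (G) in
/-- Junk value `0` when no finite vertex set separates `G`. -/
noncomputable def vertexConnectivity : ℕ :=
  sInf {n | ∃ S : Finset V, #S = n ∧ ¬ (G.induce (S : Set V)ᶜ).Preconnected}

theorem vertexConnectivity_le_card {S : Finset V}
    (hS : ¬ (G.induce (S : Set V)ᶜ).Preconnected) : G.vertexConnectivity ≤ #S :=
  Nat.sInf_le (by exact ⟨S, rfl, hS⟩)

theorem exists_card_eq_vertexConnectivity {S : Finset V}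
    (hS : ¬ (G.induce (S : Set V)ᶜ).Preconnected) :
    ∃ S₀ : Finset V, #S₀ = G.vertexConnectivity ∧ ¬ (G.induce (S₀ : Set V)ᶜ).Preconnected := by
  have hne : {n | ∃ S : Finset V, #S = n ∧ ¬ (G.induce (S : Set V)ᶜ).Preconnected}.Nonempty :=
    ⟨_, S, rfl, hS⟩
  exact Nat.sInf_mem hne

section Boundary

variable [DecidableEq V] [G.LocallyFinite]

variable (G) in
def boundary (A : Finset V) : Finset V :=
  A.biUnion (fun a => G.neighborFinset a) \ A

theorem mem_boundary {A : Finset V} {t : V} :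
    t ∈ G.boundary A ↔ t ∉ A ∧ ∃ a ∈ A, G.Adj a t := by
  simp [boundary, and_comm]

theorem mem_or_mem_boundary_of_adj {A : Finset V} {a q : V} (ha : a ∈ A) (haq : G.Adj a q) :
    q ∈ A ∨ q ∈ G.boundary A := by
  by_cases hq : q ∈ A
  · exact Or.inl hq
  · exact Or.inr (mem_boundary.2 ⟨hq, a, ha, haq⟩)

theorem boundary_image (α : G ≃g G) (A : Finset V) :
    G.boundary (A.image α) = (G.boundary A).image α := by
  ext t
  obtain ⟨s, rfl⟩ := α.surjective t
  simp [mem_boundary, α.injective.eq_iff, α.map_adj_iff]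

theorem degree_add_one_le_card_add_card_boundary {A : Finset V} {a : V} (ha : a ∈ A) :
    G.degree a + 1 ≤ #A + #(G.boundary A) := by
  have hsub : insert a (G.neighborFinset a) ⊆ A ∪ G.boundary A :=
    insert_subset (mem_union_left _ ha) fun q hq =>
      mem_union.2 (mem_or_mem_boundary_of_adj ha ((mem_neighborFinset _ _ _).1 hq))
  calc G.degree a + 1 = #(insert a (G.neighborFinset a)) := by
        rw [card_insert_of_notMem (by simp), card_neighborFinset_eq_degree]
    _ ≤ #A + #(G.boundary A) := (card_le_card hsub).trans (card_union_le _ _)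

theorem card_boundary_inter_add_card_boundary_union_le (X Y : Finset V) :
    #(G.boundary (X ∩ Y)) + #(G.boundary (X ∪ Y)) ≤ #(G.boundary X) + #(G.boundary Y) := by
  have hunion : G.boundary (X ∩ Y) ∪ G.boundary (X ∪ Y) ⊆ G.boundary X ∪ G.boundary Y := by
    intro v hv
    rcases mem_union.1 hv with hv | hv <;> obtain ⟨hv, a, ha, hav⟩ := mem_boundary.1 hv
    · rw [mem_inter] at hv ha
      by_cases hvX : v ∈ X
      · exact mem_union_right _ (mem_boundary.2 ⟨fun hvY => hv ⟨hvX, hvY⟩, a, ha.2, hav⟩)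
      · exact mem_union_left _ (mem_boundary.2 ⟨hvX, a, ha.1, hav⟩)
    · rw [mem_union, not_or] at hv
      rcases mem_union.1 ha with ha | ha
      · exact mem_union_left _ (mem_boundary.2 ⟨hv.1, a, ha, hav⟩)
      · exact mem_union_right _ (mem_boundary.2 ⟨hv.2, a, ha, hav⟩)
  have hinter : G.boundary (X ∩ Y) ∩ G.boundary (X ∪ Y) ⊆ G.boundary X ∩ G.boundary Y := by
    intro v hv
    obtain ⟨⟨-, a, ha, hav⟩, hvXY, -⟩ := And.imp mem_boundary.1 mem_boundary.1 (mem_inter.1 hv)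
    rw [mem_inter] at ha
    rw [mem_union, not_or] at hvXY
    exact mem_inter.2 ⟨mem_boundary.2 ⟨hvXY.1, a, ha.1, hav⟩, mem_boundary.2 ⟨hvXY.2, a, ha.2, hav⟩⟩
  calc _ = #(G.boundary (X ∩ Y) ∪ G.boundary (X ∪ Y)) +
        #(G.boundary (X ∩ Y) ∩ G.boundary (X ∪ Y)) := (card_union_add_card_inter _ _).symm
    _ ≤ #(G.boundary X ∪ G.boundary Y) + #(G.boundary X ∩ G.boundary Y) :=
        add_le_add (card_le_card hunion) (card_le_card hinter)
    _ = _ := card_union_add_card_inter _ _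

theorem card_boundary_sdiff_le (A X : Finset V) :
    #(G.boundary (A \ (X ∪ G.boundary X))) ≤ #(G.boundary X ∩ A) + #(G.boundary A \ X) := by
  refine (card_le_card fun v hv => ?_).trans (card_union_le _ _)
  obtain ⟨hvY, u, hu, huv⟩ := mem_boundary.1 hv
  simp only [mem_sdiff, mem_union, not_or] at hvY hu
  have hvX : v ∉ X := fun hvX => hu.2.2 (mem_boundary.2 ⟨hu.2.1, v, hvX, huv.symm⟩)
  by_cases hvA : v ∈ A
  · have hvN : v ∈ G.boundary X := by tauto
    exact mem_union_left _ (mem_inter.2 ⟨hvN, hvA⟩)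
  · exact mem_union_right _ (mem_sdiff.2 ⟨mem_boundary.2 ⟨hvA, u, hu.1, huv⟩, hvX⟩)

theorem vertexConnectivity_le_card_boundary [Infinite V] {A : Finset V} (hA : A.Nonempty) :
    G.vertexConnectivity ≤ #(G.boundary A) := by
  refine vertexConnectivity_le_card fun hpre => ?_
  obtain ⟨x, hx⟩ := hA
  obtain ⟨y, hy⟩ := Infinite.exists_notMem_finset (A ∪ G.boundary A)
  rw [mem_union, not_or] at hy
  obtain ⟨p, hp, q, hqA, hqN, hpq⟩ := exists_adj_of_preconnected_induce_compl hpre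
    (P := (A : Set V)) hx (fun h => (mem_boundary.1 h).1 hx) hy.1 hy.2
  exact hqN (mem_boundary.2 ⟨hqA, p, hp, hpq⟩)

variable (G) in
/-- A finite side of a minimum separating set: in an infinite graph `G.boundary A` separates `A`
from the rest. -/
structure IsFragment (A : Finset V) : Prop where
  nonempty : A.Nonempty
  card_boundary : #(G.boundary A) = G.vertexConnectivity

variable (G) in
noncomputable def atomSize : ℕ :=
  sInf {n | ∃ A, G.IsFragment A ∧ #A = n}

variable (G) in
structure IsAtom (A : Finset V) : Prop where
  isFragment : G.IsFragment A
  card_eq : #A = G.atomSize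

theorem IsFragment.atomSize_le {A : Finset V} (hA : G.IsFragment A) : G.atomSize ≤ #A :=
  Nat.sInf_le ⟨A, hA, rfl⟩

theorem IsFragment.exists_isAtom {A : Finset V} (hA : G.IsFragment A) : ∃ B, G.IsAtom B := by
  have hne : {n | ∃ A, G.IsFragment A ∧ #A = n}.Nonempty := ⟨_, A, hA, rfl⟩
  obtain ⟨B, hB, hcard⟩ := Nat.sInf_mem hne
  exact ⟨B, hB, hcard⟩

theorem IsAtom.atomSize_pos {A : Finset V} (hA : G.IsAtom A) : 0 < G.atomSize :=
  hA.card_eq ▸ card_pos.2 hA.isFragment.nonempty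

theorem IsAtom.image {A : Finset V} (hA : G.IsAtom A) (α : G ≃g G) : G.IsAtom (A.image α) := by
  refine ⟨⟨hA.isFragment.nonempty.image α, ?_⟩, ?_⟩
  · rw [boundary_image, card_image_of_injective _ α.injective, hA.isFragment.card_boundary]
  · rw [card_image_of_injective _ α.injective, hA.card_eq]

theorem IsAtom.exists_isAtom_mem {A : Finset V} (hA : G.IsAtom A)
    (htrans : ∀ u v : V, ∃ α : G ≃g G, α u = v) (v : V) : ∃ B, G.IsAtom B ∧ v ∈ B := by
  obtain ⟨a, ha⟩ := hA.isFragment.nonempty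
  obtain ⟨α, rfl⟩ := htrans a v
  exact ⟨_, hA.image α, mem_image_of_mem α ha⟩

section Infinite

variable [Infinite V] {A B X Y : Finset V}

theorem IsFragment.inter (hX : G.IsFragment X) (hY : G.IsFragment Y) (hXY : (X ∩ Y).Nonempty) :
    G.IsFragment (X ∩ Y) := by
  have hsub := card_boundary_inter_add_card_boundary_union_le (G := G) X Y
  have hunion : G.vertexConnectivity ≤ #(G.boundary (X ∪ Y)) :=
    vertexConnectivity_le_card_boundary (hX.nonempty.mono subset_union_left)
  have hinter := vertexConnectivity_le_card_boundary (G := G) hXY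
  have := hX.card_boundary
  have := hY.card_boundary
  exact ⟨hXY, by omega⟩

theorem IsAtom.subset_of_inter_nonempty (hA : G.IsAtom A) (hX : G.IsFragment X)
    (hAX : (A ∩ X).Nonempty) : A ⊆ X := by
  have hcard := (hA.isFragment.inter hX hAX).atomSize_le
  exact inter_eq_left.1 (eq_of_subset_of_card_le inter_subset_left (hA.card_eq ▸ hcard))

theorem IsAtom.eq_of_mem (hA : G.IsAtom A) (hB : G.IsAtom B) {v : V} (hvA : v ∈ A)
    (hvB : v ∈ B) : A = B :=
  eq_of_subset_of_card_le (hA.subset_of_inter_nonempty hB.isFragment ⟨v, mem_inter.2 ⟨hvA, hvB⟩⟩)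
    (by rw [hA.card_eq, hB.card_eq])

theorem IsAtom.subset_boundary (hA : G.IsAtom A) (hX : G.IsFragment X) {t : V} (htA : t ∈ A)
    (htX : t ∈ G.boundary X) : A ⊆ G.boundary X := by
  have hAX : ∀ v ∈ A, v ∉ X := fun v hvA hvX => (mem_boundary.1 htX).1
    (hA.subset_of_inter_nonempty hX ⟨v, mem_inter.2 ⟨hvA, hvX⟩⟩ htA)
  by_contra hsub
  obtain ⟨b, hbA, hbN⟩ := not_subset.1 hsub
  -- Cross `A` with the far side of `X`: the corners `A \ (X ∪ ∂X)`, which contains `b` but not `t`,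
  -- and `X \ (A ∪ ∂A)` have boundaries of total size at most `|∂A| + |∂X| = 2κ`, so the first is
  -- a fragment smaller than `A`; if the second is empty, then `X ⊆ ∂A` forces `A ⊆ ∂X`.
  have hY : (A \ (X ∪ G.boundary X)).Nonempty := ⟨b, by simp [hbA, hbN, hAX b hbA]⟩
  have hYA : #(A \ (X ∪ G.boundary X)) < #A :=
    card_lt_card ⟨sdiff_subset, fun h => (mem_sdiff.1 (h htA)).2 (mem_union_right _ htX)⟩
  have hκY := vertexConnectivity_le_card_boundary (G := G) hY
  have hNY := card_boundary_sdiff_le (G := G) A X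
  have hNA := card_inter_add_card_sdiff (G.boundary A) X
  have hμA := hA.card_eq
  have hμX := hX.atomSize_le
  rw [hA.isFragment.card_boundary] at hNA
  by_cases hZ : (X \ (A ∪ G.boundary A)).Nonempty
  · have hκZ := vertexConnectivity_le_card_boundary (G := G) hZ
    have hNZ := card_boundary_sdiff_le (G := G) X A
    have hNX := card_inter_add_card_sdiff (G.boundary X) A
    rw [hX.card_boundary] at hNX
    have hYfrag : G.IsFragment (A \ (X ∪ G.boundary X)) := ⟨hY, by omega⟩
    have := hYfrag.atomSize_le
    omega
  · have hXN : X ⊆ G.boundary A := fun v hv => by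
      by_contra hvN
      exact hZ ⟨v, mem_sdiff.2 ⟨hv, fun h => (mem_union.1 h).elim (fun hvA => hAX v hvA hv) hvN⟩⟩
    rw [inter_eq_right.2 hXN] at hNA
    exact hsub (inter_eq_right.1 (eq_of_subset_of_card_le inter_subset_right (by omega)))

theorem IsAtom.subset_boundary_of_subset_boundary (hA : G.IsAtom A) (hB : G.IsAtom B)
    (hBA : B ⊆ G.boundary A) : A ⊆ G.boundary B := by
  obtain ⟨b, hb⟩ := hB.isFragment.nonempty
  obtain ⟨-, a, ha, hab⟩ := mem_boundary.1 (hBA hb)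
  have haB : a ∉ B := fun haB => (mem_boundary.1 (hBA haB)).1 ha
  exact hA.subset_boundary hB.isFragment ha (mem_boundary.2 ⟨haB, b, hb, hab.symm⟩)

variable (G) in
def atomGraph : SimpleGraph (Finset V) where
  Adj A B := G.IsAtom A ∧ G.IsAtom B ∧ B ⊆ G.boundary A
  symm := ⟨fun _ _ h => ⟨h.2.1, h.1, h.1.subset_boundary_of_subset_boundary h.2.1 h.2.2⟩⟩
  loopless := ⟨fun _ h => by
    obtain ⟨a, ha⟩ := h.1.isFragment.nonempty
    exact (mem_boundary.1 (h.2.2 ha)).1 ha⟩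

theorem atomGraph_adj_of_mem_boundary (hA : G.IsAtom A) (hB : G.IsAtom B) {t : V} (htB : t ∈ B)
    (htA : t ∈ G.boundary A) : (atomGraph G).Adj A B :=
  ⟨hA, hB, hB.subset_boundary hA.isFragment htB htA⟩

theorem exists_atomGraph_adj_not_mem (hG : G.Connected)
    (htrans : ∀ u v : V, ∃ α : G ≃g G, α u = v) {s : Finset (Finset V)} (hs : s.Nonempty)
    (hsA : ∀ A ∈ s, G.IsAtom A) : ∃ A ∈ s, ∃ B ∉ s, (atomGraph G).Adj A B := by
  obtain ⟨A, hA⟩ := hs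
  obtain ⟨a, ha⟩ := (hsA A hA).isFragment.nonempty
  obtain ⟨y, hy⟩ := Infinite.exists_notMem_finset (s.biUnion id)
  obtain ⟨p, hp, q, hq, hpq⟩ := hG.exists_adj_of_mem_of_not_mem
    (P := (s.biUnion id : Set V)) (mem_biUnion.2 ⟨A, hA, ha⟩) hy
  obtain ⟨X, hX, hpX⟩ := mem_biUnion.1 hp
  have hqX : q ∈ G.boundary X :=
    mem_boundary.2 ⟨fun h => hq (mem_biUnion.2 ⟨X, hX, h⟩), p, hpX, hpq⟩
  obtain ⟨Y, hY, hqY⟩ := (hsA X hX).exists_isAtom_mem htrans q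
  exact ⟨X, hX, Y, fun h => hq (mem_biUnion.2 ⟨Y, h, hqY⟩),
    atomGraph_adj_of_mem_boundary (hsA X hX) hY hqY hqX⟩

theorem IsAtom.atomSize_dvd_vertexConnectivity (hA : G.IsAtom A)
    (htrans : ∀ u v : V, ∃ α : G ≃g G, α u = v) : G.atomSize ∣ G.vertexConnectivity := by
  rw [← hA.isFragment.card_boundary]
  refine dvd_card_of_forall_exists_subset G.IsAtom (fun B hB => hB.card_eq)
    (fun B B' hB hB' v hv hv' => hB.eq_of_mem hB' hv hv') fun v hv => ?_
  obtain ⟨B, hB, hvB⟩ := hA.exists_isAtom_mem htrans v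
  exact ⟨B, hB, hvB, hB.subset_boundary hA.isFragment hvB hv⟩

theorem IsAtom.vertexConnectivity_pos (hA : G.IsAtom A) (hG : G.Connected)
    (htrans : ∀ u v : V, ∃ α : G ≃g G, α u = v) : 0 < G.vertexConnectivity := by
  obtain ⟨X, hX, B, -, hXB⟩ := exists_atomGraph_adj_not_mem hG htrans (singleton_nonempty A)
    (by simpa using hA)
  rw [mem_singleton] at hX
  subst hX
  rw [← hA.isFragment.card_boundary]
  exact card_pos.2 (hXB.2.1.isFragment.nonempty.mono hXB.2.2)

theorem IsAtom.vertexConnectivity_ne_atomSize (hA : G.IsAtom A) (hG : G.Connected)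
    (htrans : ∀ u v : V, ∃ α : G ≃g G, α u = v) : G.vertexConnectivity ≠ G.atomSize := by
  intro h
  have hμ := hA.atomSize_pos
  obtain ⟨t, ht⟩ : (G.boundary A).Nonempty :=
    card_pos.1 (by rw [hA.isFragment.card_boundary]; omega)
  obtain ⟨B, hB, htB⟩ := hA.exists_isAtom_mem htrans t
  have hAB := atomGraph_adj_of_mem_boundary hA hB htB ht
  have hfill : ∀ {X Y}, (atomGraph G).Adj X Y → Y = G.boundary X := fun hXY =>
    eq_of_subset_of_card_le hXY.2.2
      (by rw [hXY.1.isFragment.card_boundary, hXY.2.1.card_eq, h])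
  obtain ⟨X, hX, Y, hY, hXY⟩ := exists_atomGraph_adj_not_mem hG htrans (s := {A, B})
    (insert_nonempty _ _) (by simp [hA, hB])
  simp only [mem_insert, mem_singleton, not_or] at hX hY
  rcases hX with rfl | rfl
  · exact hY.2 ((hfill hXY).trans (hfill hAB).symm)
  · exact hY.1 ((hfill hXY).trans (hfill hAB.symm).symm)

theorem IsAtom.isAtom_boundary_sdiff {C P : Finset V} (hC : G.IsAtom C) (hP : G.IsAtom P)
    (hPC : P ⊆ G.boundary C) (htrans : ∀ u v : V, ∃ α : G ≃g G, α u = v)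
    (h2 : G.vertexConnectivity = 2 * G.atomSize) : G.IsAtom (G.boundary C \ P) := by
  have hcard : #(G.boundary C \ P) = G.atomSize := by
    rw [card_sdiff_of_subset hPC, hC.isFragment.card_boundary, hP.card_eq]
    omega
  obtain ⟨t, ht⟩ : (G.boundary C \ P).Nonempty := card_pos.1 (hcard ▸ hP.atomSize_pos)
  rw [mem_sdiff] at ht
  obtain ⟨B, hB, htB⟩ := hC.exists_isAtom_mem htrans t
  have hsub : B ⊆ G.boundary C \ P := fun v hv =>
    mem_sdiff.2 ⟨hB.subset_boundary hC.isFragment htB ht.1 hv,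
      fun hvP => ht.2 (hB.eq_of_mem hP hv hvP ▸ htB)⟩
  rwa [← eq_of_subset_of_card_le hsub (by rw [hcard, hB.card_eq])]

variable (G) in
/-- When the boundary of every atom consists of two atoms, this is the non-backtracking walk
`X, Y, …` in `atomGraph G`. -/
def boundarySeq (X Y : Finset V) : ℕ → Finset V
  | 0 => X
  | 1 => Y
  | n + 2 => G.boundary (boundarySeq X Y (n + 1)) \ boundarySeq X Y n

theorem atomGraph_adj_boundarySeq (hAB : (atomGraph G).Adj A B)
    (htrans : ∀ u v : V, ∃ α : G ≃g G, α u = v) (h2 : G.vertexConnectivity = 2 * G.atomSize)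
    (n : ℕ) : (atomGraph G).Adj (G.boundarySeq A B n) (G.boundarySeq A B (n + 1)) := by
  induction n with
  | zero => exact hAB
  | succ n ih =>
    exact ⟨ih.2.1, ih.2.1.isAtom_boundary_sdiff ih.1 ih.symm.2.2 htrans h2, sdiff_subset⟩

theorem boundary_boundarySeq (hAB : (atomGraph G).Adj A B)
    (htrans : ∀ u v : V, ∃ α : G ≃g G, α u = v) (h2 : G.vertexConnectivity = 2 * G.atomSize)
    (n : ℕ) : G.boundary (G.boundarySeq A B (n + 1)) =
      G.boundarySeq A B n ∪ G.boundarySeq A B (n + 2) :=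
  (union_sdiff_of_subset (atomGraph_adj_boundarySeq hAB htrans h2 n).symm.2.2).symm

theorem exists_boundarySeq_eq_boundary_sdiff (hAB : (atomGraph G).Adj A B)
    (htrans : ∀ u v : V, ∃ α : G ≃g G, α u = v) (h2 : G.vertexConnectivity = 2 * G.atomSize)
    (hpre : (G.induce (A : Set V)ᶜ).Preconnected) :
    ∃ m, G.boundarySeq A B (m + 1) = G.boundary A \ B := by
  have hadj := atomGraph_adj_boundarySeq hAB htrans h2
  have hN := boundary_boundarySeq hAB htrans h2
  have hC := hAB.1.isAtom_boundary_sdiff hAB.2.1 hAB.2.2 htrans h2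
  obtain ⟨b, hb⟩ := hAB.2.1.isFragment.nonempty
  obtain ⟨c, hc⟩ := hC.isFragment.nonempty
  have hbA : b ∉ A := (mem_boundary.1 (hAB.2.2 hb)).1
  have hcA : c ∉ A := (mem_boundary.1 (mem_sdiff.1 hc).1).1
  suffices hcP : c ∈ {v | ∃ n, v ∈ G.boundarySeq A B (n + 1)} by
    obtain ⟨m, hm⟩ := hcP
    exact ⟨m, (hadj m).2.1.eq_of_mem hC hm hc⟩
  by_contra hcP
  obtain ⟨p, ⟨n, hp⟩, q, hqP, hqA, hpq⟩ := exists_adj_of_preconnected_induce_compl hpre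
    (P := {v | ∃ n, v ∈ G.boundarySeq A B (n + 1)}) ⟨0, hb⟩ hbA hcP hcA
  rcases mem_or_mem_boundary_of_adj hp hpq with hq | hq
  · exact hqP ⟨n, hq⟩
  rcases mem_union.1 (hN n ▸ hq) with hq | hq
  · obtain _ | n := n
    exacts [hqA hq, hqP ⟨n, hq⟩]
  · exact hqP ⟨n + 1, hq⟩

theorem eq_or_eq_of_atomGraph_adj_boundarySeq (hAB : (atomGraph G).Adj A B)
    (htrans : ∀ u v : V, ∃ α : G ≃g G, α u = v) (h2 : G.vertexConnectivity = 2 * G.atomSize)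
    {n : ℕ} {X : Finset V} (hX : (atomGraph G).Adj (G.boundarySeq A B (n + 1)) X) :
    X = G.boundarySeq A B n ∨ X = G.boundarySeq A B (n + 2) := by
  have hadj := atomGraph_adj_boundarySeq hAB htrans h2
  obtain ⟨x, hx⟩ := hX.2.1.isFragment.nonempty
  rcases mem_union.1 (boundary_boundarySeq hAB htrans h2 n ▸ hX.2.2 hx) with h | h
  · exact Or.inl (hX.2.1.eq_of_mem (hadj n).1 hx h)
  · exact Or.inr (hX.2.1.eq_of_mem (hadj (n + 1)).2.1 hx h)

theorem boundarySeq_ne_boundarySeq_add_two (hAB : (atomGraph G).Adj A B)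
    (htrans : ∀ u v : V, ∃ α : G ≃g G, α u = v) (h2 : G.vertexConnectivity = 2 * G.atomSize)
    (n : ℕ) : G.boundarySeq A B n ≠ G.boundarySeq A B (n + 2) := fun h => by
  obtain ⟨x, hx⟩ := (atomGraph_adj_boundarySeq hAB htrans h2 n).1.isFragment.nonempty
  have hx' : x ∈ G.boundarySeq A B (n + 2) := h ▸ hx
  exact (mem_sdiff.1 hx').2 hx

theorem not_injective_boundarySeq (hAB : (atomGraph G).Adj A B)
    (htrans : ∀ u v : V, ∃ α : G ≃g G, α u = v) (h2 : G.vertexConnectivity = 2 * G.atomSize)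
    (hpre : (G.induce (A : Set V)ᶜ).Preconnected) : ¬ Function.Injective (G.boundarySeq A B) := by
  obtain ⟨m, hm⟩ := exists_boundarySeq_eq_boundary_sdiff hAB htrans h2 hpre
  have hA : (atomGraph G).Adj (G.boundarySeq A B (m + 1)) A := by
    rw [hm]
    exact (show (atomGraph G).Adj A (G.boundary A \ B) from
      ⟨hAB.1, hAB.1.isAtom_boundary_sdiff hAB.2.1 hAB.2.2 htrans h2, sdiff_subset⟩).symm
  intro hinj
  rcases eq_or_eq_of_atomGraph_adj_boundarySeq hAB htrans h2 hA with h | h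
  · obtain rfl : 0 = m := hinj h
    obtain ⟨b, hb⟩ := hAB.2.1.isFragment.nonempty
    have hb' : b ∈ G.boundary A \ B := by rw [← hm]; exact hb
    exact (mem_sdiff.1 hb').2 hb
  · exact absurd (@hinj 0 (m + 2) h) (by omega)

theorem IsAtom.vertexConnectivity_ne_two_mul_atomSize (hA : G.IsAtom A) (hG : G.Connected)
    (htrans : ∀ u v : V, ∃ α : G ≃g G, α u = v) :
    G.vertexConnectivity ≠ 2 * G.atomSize := by
  intro h2
  have hμ := hA.atomSize_pos
  obtain ⟨t, ht⟩ : (G.boundary A).Nonempty :=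
    card_pos.1 (by rw [hA.isFragment.card_boundary]; omega)
  obtain ⟨B, hB, htB⟩ := hA.exists_isAtom_mem htrans t
  have hAB := atomGraph_adj_of_mem_boundary hA hB htB ht
  have hpre : (G.induce (A : Set V)ᶜ).Preconnected := by
    by_contra hsep
    have := vertexConnectivity_le_card hsep
    rw [hA.card_eq] at this
    omega
  have hadj := atomGraph_adj_boundarySeq hAB htrans h2
  obtain ⟨k, hk⟩ := exists_forall_adj_of_not_injective (atomGraph G) hadj
    (boundarySeq_ne_boundarySeq_add_two hAB htrans h2)
    (fun _ _ => eq_or_eq_of_atomGraph_adj_boundarySeq hAB htrans h2)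
    (not_injective_boundarySeq hAB htrans h2 hpre)
  obtain ⟨X, hX, Y, hY, hXY⟩ := exists_atomGraph_adj_not_mem hG htrans
    (s := (range (k + 1)).image (G.boundarySeq A B)) ⟨A, mem_image_of_mem _ (mem_range.2 k.succ_pos)⟩
    (by simp only [mem_image]; rintro _ ⟨i, -, rfl⟩; exact (hadj i).1)
  simp only [mem_image, mem_range, not_exists, not_and] at hX hY
  obtain ⟨i, hi, rfl⟩ := hX
  obtain ⟨j, hj, rfl⟩ := hk i (by omega) Y hXY
  exact hY j (by omega) rfl

theorem IsAtom.three_mul_atomSize_le_vertexConnectivity (hA : G.IsAtom A) (hG : G.Connected)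
    (htrans : ∀ u v : V, ∃ α : G ≃g G, α u = v) : 3 * G.atomSize ≤ G.vertexConnectivity := by
  obtain ⟨c, hc⟩ := hA.atomSize_dvd_vertexConnectivity htrans
  have h0 := hA.vertexConnectivity_pos hG htrans
  have h1 := hA.vertexConnectivity_ne_atomSize hG htrans
  have h2 := hA.vertexConnectivity_ne_two_mul_atomSize hG htrans
  rcases (show c ≤ 2 ∨ 3 ≤ c by omega) with hc2 | hc3
  · interval_cases c <;> omega
  · rw [hc]
    nlinarith

end Infinite

end Boundary

end SimpleGraph

theorem OneEnded.infinite {V : Type*} {G : SimpleGraph V} (hone : OneEnded G) : Infinite V := by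
  obtain ⟨C, hC, -⟩ := hone ∅
  exact Set.infinite_univ_iff.1 (hC.mono (Set.subset_univ _))

theorem OneEnded.exists_isAtom {V : Type*} [DecidableEq V] {G : SimpleGraph V}
    [G.LocallyFinite] (hone : OneEnded G) {S : Finset V}
    (hS : ¬ (G.induce (S : Set V)ᶜ).Preconnected) : ∃ A, G.IsAtom A := by
  have := hone.infinite
  obtain ⟨S₀, hS₀card, hS₀⟩ := exists_card_eq_vertexConnectivity hS
  obtain ⟨D, hD⟩ : ∃ D : G.ComponentCompl (S₀ : Set V), D.supp.Finite := by
    obtain ⟨C, -, hC⟩ := hone S₀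
    simp only [Preconnected, not_forall] at hS₀
    obtain ⟨u, v, huv⟩ := hS₀
    by_contra! hinf
    exact huv (ConnectedComponent.eq.1 ((hC _ (hinf _)).trans (hC _ (hinf _)).symm))
  have hN : G.boundary hD.toFinset ⊆ S₀ := fun t ht => by
    obtain ⟨htD, a, haD, hat⟩ := mem_boundary.1 ht
    by_contra htS
    exact htD (hD.mem_toFinset.2 (D.mem_of_adj a t (hD.mem_toFinset.1 haD) (by simpa using htS) hat))
  have hne : hD.toFinset.Nonempty := hD.toFinset_nonempty.2 D.nonempty
  exact IsFragment.exists_isAtom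
    ⟨hne, le_antisymm (hS₀card ▸ card_le_card hN) (vertexConnectivity_le_card_boundary hne)⟩

/-- Babai–Watkins: if `G` is a connected, locally finite, vertex-transitive graph with
exactly one end and common vertex degree `d`, then the vertex connectivity of `G` is at
least `3(d+1)/4`, i.e. any finite vertex set whose removal disconnects `G` has size at
least `3(d+1)/4`. -/
theorem connectivity_ge_of_oneEnded_transitive
    {V : Type*} (G : SimpleGraph V) [G.LocallyFinite]
    (hconn : G.Connected)
    (htrans : ∀ u v : V, ∃ α : G ≃g G, α u = v)
    (hone : OneEnded G)
    (d : ℕ) (hd : ∀ v : V, G.degree v = d) :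
    ∀ S : Finset V, ¬ (G.induce ((S : Set V)ᶜ)).Connected → 3 * (d + 1) ≤ 4 * S.card := by
  classical
  intro S hS
  have := hone.infinite
  have hsep : ¬ (G.induce (S : Set V)ᶜ).Preconnected := fun h => by
    obtain ⟨v, hv⟩ := Infinite.exists_notMem_finset S
    exact hS ((connected_iff _).2 ⟨h, ⟨⟨v, hv⟩⟩⟩)
  obtain ⟨A, hA⟩ := hone.exists_isAtom hsep
  obtain ⟨a, ha⟩ := hA.isFragment.nonempty
  have hdeg := degree_add_one_le_card_add_card_boundary (G := G) ha
  rw [hd, hA.card_eq, hA.isFragment.card_boundary] at hdeg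
  have h3 := hA.three_mul_atomSize_le_vertexConnectivity hconn htrans
  have hS := vertexConnectivity_le_card hsep
  omega
end
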